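/- Let χ be a quasicharacter of F^× of conductor 𝔭ⁿ with n ≥ 1, and let a ∈ F^× with ord(a) ≠ −n. Then ∫_U ψ(ax)χ(x) d^×x = 0. -/

import Mathlib

/-!
Write `I = ∫_U ψ(ax)χ(x) dx` (on `U` the density `q^{ord x}` of `d^×x` is `1`). If `ord a < -n`,
the translation `x ↦ x + ϖⁿ` preserves `U` and `χ`, because `(x + ϖⁿ)/x ∈ U⁽ⁿ⁾`, but multiplies
`ψ(a·)` by `ψ(aϖⁿ) ≠ 1`. If `ord a > -n`, pick `u ∈ U⁽ⁿ⁻¹⁾` with `χ u ≠ 1`; the substitution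
`x ↦ ux` preserves `U`, the Haar measure and `ψ(a·)`, because `ax(u - 1) ∈ 𝒪`, but multiplies `χ`
by `χ u`. Either way `I = cI` with `c ≠ 1`.
-/

open MeasureTheory Filter

variable {F : Type*}

/-- The valuation ring `𝒪 = {x | ord x ≥ 0}` (with the convention `0 ∈ 𝒪`). -/
def valRing [Field F] (ord : F → ℤ) : Set F := {x | x = 0 ∨ 0 ≤ ord x}

/-- The unit group `U = 𝒪^×`. -/
def unitGroup [Field F] (ord : F → ℤ) : Set F := {x | x ≠ 0 ∧ ord x = 0}

/-- The principal congruence subgroup `U⁽ⁿ⁾ = {x ∈ U | x ≡ 1 mod 𝔭ⁿ}` (with `U⁽⁰⁾ = U`). -/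
def unitGroupN [Field F] (ord : F → ℤ) (n : ℕ) : Set F :=
  {x | x ≠ 0 ∧ ord x = 0 ∧ (x = 1 ∨ (n : ℤ) ≤ ord (x - 1))}

/-- A quasicharacter of `F^×`: a multiplicative map `F^× → ℂ^×`. -/
def IsQuasichar [Field F] (χ : F → ℂ) : Prop :=
  (∀ x y : F, x ≠ 0 → y ≠ 0 → χ (x * y) = χ x * χ y) ∧ ∀ x : F, x ≠ 0 → χ x ≠ 0

/-- `χ` has conductor `𝔭^f`: `f` is minimal with `U⁽ᶠ⁾ ⊆ ker χ`. -/
def HasConductor [Field F] (ord : F → ℤ) (χ : F → ℂ) (f : ℕ) : Prop :=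
  (∀ x ∈ unitGroupN ord f, χ x = 1) ∧ ∀ m : ℕ, m < f → ∃ x ∈ unitGroupN ord m, χ x ≠ 1

/-- The integral `∫_X f d^×x` against the multiplicative Haar measure
`d^×x = (1 - 1/q)⁻¹ dx/|x|`, where `dx = μ` is the additive Haar measure and
`|x| = q^{-ord x}` (so `dx/|x| = q^{ord x} dx`). -/
noncomputable def mulInt [Field F] [MeasurableSpace F] (μ : Measure F) (q : ℕ)
    (ord : F → ℤ) (X : Set F) (f : F → ℂ) : ℂ :=
  (1 - (q : ℂ)⁻¹)⁻¹ * ∫ x in X, f x * (q : ℂ) ^ (ord x) ∂μ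

open Topology

section Valuation

variable [Field F]

def OrdMul (ord : F → ℤ) : Prop :=
  ∀ x y : F, x ≠ 0 → y ≠ 0 → ord (x * y) = ord x + ord y

def OrdUltrametric (ord : F → ℤ) : Prop :=
  ∀ x y : F, x ≠ 0 → y ≠ 0 → x + y ≠ 0 → min (ord x) (ord y) ≤ ord (x + y)

variable {ord : F → ℤ}

theorem OrdMul.ord_one (hord : OrdMul ord) : ord 1 = 0 := by
  have h := hord 1 1 one_ne_zero one_ne_zero
  rw [one_mul] at h
  omega

theorem OrdMul.ord_inv (hord : OrdMul ord) {x : F} (hx : x ≠ 0) : ord x⁻¹ = -ord x := by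
  have h := hord x x⁻¹ hx (inv_ne_zero hx)
  rw [mul_inv_cancel₀ hx, hord.ord_one] at h
  omega

theorem OrdMul.ord_neg (hord : OrdMul ord) {x : F} (hx : x ≠ 0) : ord (-x) = ord x := by
  have h1 := hord (-1) (-1) (by norm_num) (by norm_num)
  have h2 := hord (-1) x (by norm_num) hx
  rw [neg_mul_neg, one_mul, hord.ord_one] at h1
  rw [neg_one_mul] at h2
  omega

theorem OrdMul.ord_zpow (hord : OrdMul ord) {ϖ : F} (hϖ0 : ϖ ≠ 0) (hϖ : ord ϖ = 1) (k : ℤ) :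
    ord (ϖ ^ k) = k := by
  have hnat (m : ℕ) : ord (ϖ ^ m) = m := by
    induction m with
    | zero => simpa using hord.ord_one
    | succ m ih => rw [pow_succ, hord _ _ (pow_ne_zero _ hϖ0) hϖ0, ih, hϖ]; push_cast; ring
  rcases k.eq_nat_or_neg with ⟨m, rfl | rfl⟩
  · exact_mod_cast hnat m
  · rw [zpow_neg, zpow_natCast, hord.ord_inv (pow_ne_zero _ hϖ0), hnat]

theorem valRing_add_mem_of_addChar {ψ : F → ℂ} (hψadd : ∀ x y : F, ψ (x + y) = ψ x * ψ y)
    (hψker : ∀ x : F, ψ x = 1 ↔ x ∈ valRing ord) {s t : F} (hs : s ∈ valRing ord)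
    (ht : t ∈ valRing ord) : s + t ∈ valRing ord :=
  (hψker _).1 (by rw [hψadd, (hψker s).2 hs, (hψker t).2 ht, mul_one])

/-- Scaling by a power of `ϖ` reduces the ultrametric inequality to the closure of `𝒪` under
addition. -/
theorem OrdMul.ordUltrametric (hord : OrdMul ord) {ϖ : F} (hϖ0 : ϖ ≠ 0) (hϖ : ord ϖ = 1)
    (hO : ∀ s t : F, s ∈ valRing ord → t ∈ valRing ord → s + t ∈ valRing ord) :
    OrdUltrametric ord := by
  intro x y hx hy hxy
  set m := min (ord x) (ord y)
  have hc0 : ϖ ^ (-m) ≠ 0 := zpow_ne_zero _ hϖ0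
  have hc := hord.ord_zpow hϖ0 hϖ (-m)
  have hxO : ϖ ^ (-m) * x ∈ valRing ord :=
    Or.inr (by rw [hord _ _ hc0 hx, hc]; linarith [min_le_left (ord x) (ord y)])
  have hyO : ϖ ^ (-m) * y ∈ valRing ord :=
    Or.inr (by rw [hord _ _ hc0 hy, hc]; linarith [min_le_right (ord x) (ord y)])
  rcases mul_add (ϖ ^ (-m)) x y ▸ hO _ _ hxO hyO with h | h
  · exact absurd h (mul_ne_zero hc0 hxy)
  · rw [hord _ _ hc0 hxy, hc] at h
    omega

theorem add_ne_zero_of_ord_lt (hord : OrdMul ord) {x y : F} (hx : x ≠ 0)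
    (hlt : ord x < ord y) : x + y ≠ 0 := by
  intro h
  rw [eq_neg_of_add_eq_zero_right h, hord.ord_neg hx] at hlt
  exact hlt.false

theorem ord_add_eq_of_lt (hord : OrdMul ord) (hultra : OrdUltrametric ord) {x y : F}
    (hx : x ≠ 0) (hy : y ≠ 0) (hlt : ord x < ord y) : ord (x + y) = ord x := by
  have hxy := add_ne_zero_of_ord_lt hord hx hlt
  have h1 := hultra x y hx hy hxy
  have h2 := hultra (x + y) (-y) hxy (neg_ne_zero.2 hy) (by rwa [add_neg_cancel_right])
  rw [add_neg_cancel_right, hord.ord_neg hy] at h2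
  omega

def ordBall (hord : OrdMul ord) (hultra : OrdUltrametric ord) (k : ℤ) : AddSubgroup F where
  carrier := {x | x = 0 ∨ k ≤ ord x}
  zero_mem' := Or.inl rfl
  add_mem' := by
    rintro x y (rfl | hx) (rfl | hy)
    · simp
    · simpa using Or.inr hy
    · simpa using Or.inr hx
    by_cases hxy : x + y = 0
    · exact Or.inl hxy
    by_cases hx0 : x = 0
    · simpa [hx0] using Or.inr hy
    by_cases hy0 : y = 0
    · simpa [hy0] using Or.inr hx
    exact Or.inr ((le_min hx hy).trans (hultra x y hx0 hy0 hxy))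
  neg_mem' := by
    rintro x (rfl | hx)
    · simp
    by_cases hx0 : x = 0
    · simp [hx0]
    · exact Or.inr (hord.ord_neg hx0 ▸ hx)

end Valuation

section Topology

variable [Field F] [TopologicalSpace F] [IsTopologicalAddGroup F] {ord : F → ℤ}

theorem measurableSet_unitGroup [MeasurableSpace F] [BorelSpace F] (hord : OrdMul ord)
    (hultra : OrdUltrametric ord) (h0 : {x : F | x = 0 ∨ 0 ≤ ord x} ∈ 𝓝 0)
    (h1 : {x : F | x = 0 ∨ 1 ≤ ord x} ∈ 𝓝 0) : MeasurableSet (unitGroup ord) := by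
  have hU : unitGroup ord = (ordBall hord hultra 0 : Set F) \ ordBall hord hultra 1 := by
    ext x
    by_cases hx : x = 0 <;> simp [unitGroup, ordBall, hx]
    omega
  rw [hU]
  exact (AddSubgroup.isOpen_of_mem_nhds _ h0).measurableSet.diff
    (AddSubgroup.isOpen_of_mem_nhds _ h1).measurableSet

end Topology

theorem setIntegral_eq_zero_of_comp_eq_mul {X 𝕜 : Type*} [MeasurableSpace X] [RCLike 𝕜]
    {μ : Measure X} {s : Set X} (hs : MeasurableSet s) {e : X → X} {f : X → 𝕜} {c : 𝕜}
    (he : ∫ x in s, f (e x) ∂μ = ∫ x in s, f x ∂μ) (hf : ∀ x ∈ s, f (e x) = c * f x)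
    (hc : c ≠ 1) : ∫ x in s, f x ∂μ = 0 := by
  have hinv : c * ∫ x in s, f x ∂μ = ∫ x in s, f x ∂μ := by
    rw [← integral_const_mul, ← setIntegral_congr_fun hs hf, he]
  by_contra h
  exact hc ((mul_eq_right₀ h).1 hinv)

/-- Without regularity, uniqueness of Haar measure is only available on sets of compact closure;
the compact `K` with nonempty interior pins the scaling factor of `e` to `1`. -/
theorem ContinuousAddEquiv.setIntegral_comp_eq_of_preimage_eq {G E : Type*} [AddGroup G]
    [TopologicalSpace G] [IsTopologicalAddGroup G] [LocallyCompactSpace G] [MeasurableSpace G]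
    [BorelSpace G] [NormedAddCommGroup E] [NormedSpace ℝ E] (μ : Measure G)
    [μ.IsAddHaarMeasure] (e : G ≃ₜ+ G) {K s : Set G} (hK : IsCompact K)
    (hK0 : (interior K).Nonempty) (heK : e ⁻¹' K = K) (hs : IsCompact (closure s))
    (hes : e ⁻¹' s = s) (f : G → E) : ∫ x in s, f (e x) ∂μ = ∫ x in s, f x ∂μ := by
  have he : Measurable e := e.continuous.measurable
  have hmap (t : Set G) (ht : IsCompact (closure t)) :
      μ.map e t = Measure.addHaarScalarFactor (μ.map e) μ • μ t :=
    Measure.measure_isAddInvariant_eq_smul_of_isCompact_closure _ _ ht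
  have hc : Measure.addHaarScalarFactor (μ.map e) μ = 1 := by
    have hK' : e ⁻¹' closure K = closure K :=
      (e.toHomeomorph.preimage_closure K).trans (congrArg closure heK)
    have h := hmap (closure K) (by rw [closure_closure]; exact hK.closure)
    rw [Measure.map_apply he isClosed_closure.measurableSet, hK', ENNReal.smul_def,
      smul_eq_mul, eq_comm, ENNReal.mul_eq_right] at h
    · exact_mod_cast h
    · exact (Measure.measure_pos_of_nonempty_interior μ
        (hK0.mono (interior_mono subset_closure))).ne'
    · exact hK.closure.measure_lt_top.ne
  have hrestrict : (μ.map e).restrict s = μ.restrict s := by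
    ext t ht
    rw [Measure.restrict_apply ht, Measure.restrict_apply ht, hmap, hc, one_smul]
    exact hs.of_isClosed_subset isClosed_closure (closure_mono Set.inter_subset_right)
  calc ∫ x in s, f (e x) ∂μ = ∫ x in e ⁻¹' s, f (e x) ∂μ := by rw [hes]
    _ = ∫ y in s, f y ∂μ.map e :=
      (e.toHomeomorph.measurableEmbedding.setIntegral_map f s).symm
    _ = ∫ x in s, f x ∂μ := by rw [hrestrict]

section UnitGroup

variable [Field F] {ord : F → ℤ}

theorem add_mem_unitGroup (hord : OrdMul ord) (hultra : OrdUltrametric ord) {x c : F}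
    (hx : x ∈ unitGroup ord) (hc : c ≠ 0) (hc0 : 0 < ord c) : x + c ∈ unitGroup ord := by
  have hlt : ord x < ord c := hx.2 ▸ hc0
  exact ⟨add_ne_zero_of_ord_lt hord hx.1 hlt, (ord_add_eq_of_lt hord hultra hx.1 hc hlt).trans hx.2⟩

theorem preimage_add_right_unitGroup (hord : OrdMul ord) (hultra : OrdUltrametric ord) {b : F}
    (hb : b ≠ 0) (hb0 : 0 < ord b) : (· + b) ⁻¹' unitGroup ord = unitGroup ord := by
  ext x
  refine ⟨fun hx => ?_, fun hx => add_mem_unitGroup hord hultra hx hb hb0⟩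
  simpa using add_mem_unitGroup hord hultra hx (neg_ne_zero.2 hb) (hord.ord_neg hb ▸ hb0)

theorem preimage_mul_left_valRing (hord : OrdMul ord) {u : F} (hu : u ∈ unitGroup ord) :
    (u * ·) ⁻¹' valRing ord = valRing ord := by
  ext x
  rcases eq_or_ne x 0 with rfl | hx
  · simp [valRing]
  · simp [valRing, hord _ _ hu.1 hx, hu.1, hu.2, hx]

theorem preimage_mul_left_unitGroup (hord : OrdMul ord) {u : F} (hu : u ∈ unitGroup ord) :
    (u * ·) ⁻¹' unitGroup ord = unitGroup ord := by
  ext x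
  rcases eq_or_ne x 0 with rfl | hx
  · simp [unitGroup]
  · simp [unitGroup, hord _ _ hu.1 hx, hu.1, hu.2, hx]

theorem one_add_mem_unitGroupN (hord : OrdMul ord) (hultra : OrdUltrametric ord) {n : ℕ}
    (hn : 1 ≤ n) {t : F} (ht : t ≠ 0) (htn : n ≤ ord t) : 1 + t ∈ unitGroupN ord n := by
  have hlt : ord 1 < ord t := by rw [hord.ord_one]; omega
  refine ⟨add_ne_zero_of_ord_lt hord one_ne_zero hlt, ?_, Or.inr ?_⟩
  · rw [ord_add_eq_of_lt hord hultra one_ne_zero ht hlt, hord.ord_one]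
  · rwa [add_sub_cancel_left]

theorem IsQuasichar.apply_add_eq {χ : F → ℂ} (hχ : IsQuasichar χ) (hord : OrdMul ord)
    (hultra : OrdUltrametric ord) {n : ℕ} (hn : 1 ≤ n)
    (hχn : ∀ y ∈ unitGroupN ord n, χ y = 1) {x b : F} (hx : x ∈ unitGroup ord) (hb : b ≠ 0)
    (hbn : n ≤ ord b) : χ (x + b) = χ x := by
  have hx0 : x ≠ 0 := hx.1
  have ht : x⁻¹ * b ≠ 0 := mul_ne_zero (inv_ne_zero hx0) hb
  have htn : (n : ℤ) ≤ ord (x⁻¹ * b) := by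
    rw [hord _ _ (inv_ne_zero hx0) hb, hord.ord_inv hx0, hx.2]
    omega
  have hmem := one_add_mem_unitGroupN hord hultra hn ht htn
  rw [show x + b = x * (1 + x⁻¹ * b) by field_simp, hχ.1 _ _ hx0 hmem.1, hχn _ hmem, mul_one]

end UnitGroup

def mulLeftContinuousAddEquiv [Field F] [TopologicalSpace F] [IsTopologicalRing F] (u : F)
    (hu : u ≠ 0) : F ≃ₜ+ F :=
  { Homeomorph.mulLeft₀ u hu with map_add' := mul_add u }

section GaussIntegral

variable [Field F] [MeasurableSpace F] {ord : F → ℤ} {ψ χ : F → ℂ} {a : F}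

theorem setIntegral_unitGroup_eq_zero_of_ord_lt [MeasurableAdd F] (μ : Measure F)
    [μ.IsAddRightInvariant] (hord : OrdMul ord) (hultra : OrdUltrametric ord)
    (hψadd : ∀ x y : F, ψ (x + y) = ψ x * ψ y) (hψker : ∀ x : F, ψ x = 1 ↔ x ∈ valRing ord)
    (hχ : IsQuasichar χ) {n : ℕ} (hn : 1 ≤ n) (hχn : ∀ y ∈ unitGroupN ord n, χ y = 1)
    (hU : MeasurableSet (unitGroup ord)) {b : F} (hb : b ≠ 0) (hbn : ord b = n)
    (ha : a ≠ 0) (hlt : ord a < -n) : ∫ x in unitGroup ord, ψ (a * x) * χ x ∂μ = 0 := by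
  refine setIntegral_eq_zero_of_comp_eq_mul hU (e := (· + b)) (c := ψ (a * b)) ?_ ?_ ?_
  · have h := (measurePreserving_add_right μ b).setIntegral_preimage_emb
      (measurableEmbedding_addRight b) (fun x => ψ (a * x) * χ x) (unitGroup ord)
    rwa [preimage_add_right_unitGroup hord hultra hb (by omega)] at h
  · intro x hx
    rw [mul_add, hψadd, hχ.apply_add_eq hord hultra hn hχn hx hb hbn.ge]
    ring
  · intro h
    rcases (hψker _).1 h with h | h
    · exact mul_ne_zero ha hb h
    · rw [hord _ _ ha hb] at h
      omega

theorem setIntegral_unitGroup_eq_zero_of_le_ord [TopologicalSpace F] [IsTopologicalRing F]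
    [LocallyCompactSpace F] [BorelSpace F] (μ : Measure F) [μ.IsAddHaarMeasure]
    (hord : OrdMul ord) (hψadd : ∀ x y : F, ψ (x + y) = ψ x * ψ y)
    (hψker : ∀ x : F, ψ x = 1 ↔ x ∈ valRing ord) (hχ : IsQuasichar χ)
    (hcomp : IsCompact (valRing ord)) (h0 : valRing ord ∈ 𝓝 0)
    (hU : MeasurableSet (unitGroup ord)) {m : ℕ} {u : F} (hu : u ∈ unitGroupN ord m)
    (hχu : χ u ≠ 1) (ha : a ≠ 0) (hle : -(m : ℤ) ≤ ord a) :
    ∫ x in unitGroup ord, ψ (a * x) * χ x ∂μ = 0 := by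
  obtain ⟨hu0, huord, hu1⟩ := hu
  have huU : u ∈ unitGroup ord := ⟨hu0, huord⟩
  have hUsub : unitGroup ord ⊆ valRing ord := fun x hx => Or.inr hx.2.ge
  refine setIntegral_eq_zero_of_comp_eq_mul hU (e := (u * ·)) (c := χ u) ?_ ?_ hχu
  · exact (mulLeftContinuousAddEquiv u hu0).setIntegral_comp_eq_of_preimage_eq μ hcomp
      ⟨0, mem_interior_iff_mem_nhds.2 h0⟩ (preimage_mul_left_valRing hord huU)
      (hcomp.closure.of_isClosed_subset isClosed_closure (closure_mono hUsub))
      (preimage_mul_left_unitGroup hord huU) (fun x => ψ (a * x) * χ x)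
  · intro x hx
    have hmem : a * x * (u - 1) ∈ valRing ord := by
      rcases eq_or_ne u 1 with rfl | hne
      · simp [valRing]
      have hd := hu1.resolve_left hne
      refine Or.inr ?_
      rw [hord _ _ (mul_ne_zero ha hx.1) (sub_ne_zero.2 hne), hord _ _ ha hx.1, hx.2]
      omega
    rw [show a * (u * x) = a * x + a * x * (u - 1) by ring, hψadd, (hψker _).2 hmem,
      hχ.1 _ _ hu0 hx.1]
    ring

end GaussIntegral

theorem stmt2_general [Field F] [TopologicalSpace F] [IsTopologicalRing F]
    [MeasurableSpace F] [BorelSpace F]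
    (q : ℕ)
    (ord : F → ℤ)
    (hord : ∀ x y : F, x ≠ 0 → y ≠ 0 → ord (x * y) = ord x + ord y)
    (ϖ : F) (hϖ0 : ϖ ≠ 0) (hϖ : ord ϖ = 1)
    (hbasis : (nhds (0 : F)).HasBasis (fun _ : ℕ => True)
      (fun n => {x : F | x = 0 ∨ (n : ℤ) ≤ ord x}))
    (hcomp : IsCompact (valRing ord))
    (ψ : F → ℂ)
    (hψadd : ∀ x y : F, ψ (x + y) = ψ x * ψ y)
    (hψker : ∀ x : F, ψ x = 1 ↔ x ∈ valRing ord)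
    (μ : Measure F) [μ.IsAddHaarMeasure]
    (χ : F → ℂ) (hχ : IsQuasichar χ)
    (n : ℕ) (hn : 1 ≤ n) (hχcond : HasConductor ord χ n)
    (a : F) (ha : a ≠ 0) (haord : ord a ≠ -(n : ℤ)) :
    mulInt μ q ord (unitGroup ord) (fun x => ψ (a * x) * χ x) = 0 := by
  have hultra : OrdUltrametric ord :=
    OrdMul.ordUltrametric hord hϖ0 hϖ fun _ _ => valRing_add_mem_of_addChar hψadd hψker
  have hball (k : ℕ) : {x : F | x = 0 ∨ (k : ℤ) ≤ ord x} ∈ 𝓝 0 := hbasis.mem_of_mem trivial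
  have hU : MeasurableSet (unitGroup ord) := measurableSet_unitGroup hord hultra (hball 0) (hball 1)
  have : LocallyCompactSpace F := hcomp.locallyCompactSpace_of_mem_nhds_of_addGroup (hball 0)
  have hI : ∫ x in unitGroup ord, ψ (a * x) * χ x ∂μ = 0 := by
    rcases haord.lt_or_gt with hlt | hgt
    · exact setIntegral_unitGroup_eq_zero_of_ord_lt μ hord hultra hψadd hψker hχ hn hχcond.1 hU
        (pow_ne_zero n hϖ0) (by exact_mod_cast OrdMul.ord_zpow hord hϖ0 hϖ n) ha hlt
    · obtain ⟨u, hu, hχu⟩ := hχcond.2 (n - 1) (by omega)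
      exact setIntegral_unitGroup_eq_zero_of_le_ord μ hord hψadd hψker hχ hcomp (hball 0) hU hu
        hχu ha (by omega)
  rw [mulInt, setIntegral_congr_fun hU fun x hx => by rw [hx.2, zpow_zero, mul_one], hI, mul_zero]

/-- Let `χ` be a quasicharacter of `F^×` of conductor `𝔭ⁿ` with `n ≥ 1`,
and let `a ∈ F^×` with `ord a ≠ -n`. Then `∫_U ψ(ax)χ(x) d^×x = 0`. -/
theorem stmt2 [Field F] [TopologicalSpace F] [IsTopologicalRing F]
    [MeasurableSpace F] [BorelSpace F]
    (q : ℕ) (hq : 2 ≤ q)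
    (ord : F → ℤ)
    (hord : ∀ x y : F, x ≠ 0 → y ≠ 0 → ord (x * y) = ord x + ord y)
    (ϖ : F) (hϖ0 : ϖ ≠ 0) (hϖ : ord ϖ = 1)
    (hbasis : (nhds (0 : F)).HasBasis (fun _ : ℕ => True)
      (fun n => {x : F | x = 0 ∨ (n : ℤ) ≤ ord x}))
    (hcomp : IsCompact (valRing ord))
    (ψ : F → ℂ) (hψc : Continuous ψ)
    (hψadd : ∀ x y : F, ψ (x + y) = ψ x * ψ y)
    (hψker : ∀ x : F, ψ x = 1 ↔ x ∈ valRing ord)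
    (μ : Measure F) [μ.IsAddHaarMeasure]
    (hμ1 : μ (valRing ord) = 1)
    (hμϖ : ∀ s : Set F, μ ((fun x => ϖ * x) '' s) = μ s / q)
    (χ : F → ℂ) (hχ : IsQuasichar χ) (hχc : ContinuousOn χ {x : F | x ≠ 0})
    (n : ℕ) (hn : 1 ≤ n) (hχcond : HasConductor ord χ n)
    (a : F) (ha : a ≠ 0) (haord : ord a ≠ -(n : ℤ)) :
    mulInt μ q ord (unitGroup ord) (fun x => ψ (a * x) * χ x) = 0 :=
  stmt2_general q ord hord ϖ hϖ0 hϖ hbasis hcomp ψ hψadd hψker μ χ hχ n hn hχcond a ha haord
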